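/- arXiv:1502.07775 — 2 statements merged into one kernel-verified Lean document; each statement's English description precedes it below -/
import Mathlib

section
/- Let γ, σ, M > 0 and let g : [0,∞) → ℝ and g_N : [0,∞) → ℝ (N ∈ ℕ) be continuous with g, g_N ≥ σ, |g(q) − ℓ| ≤ M e^{−γ q} and |g_N(q) − ℓ| ≤ M e^{−γ q} for a common constant ℓ, and ‖g_N − g‖_{L^∞} → 0. Let x, x_N : [0,∞) → ℝ solve ẋ = g(x), x(0) = 0 and ẋ_N = g_N(x_N), x_N(0) = 0. Then ‖x_N − x‖_{L^∞([0,∞))} → 0 as N → ∞. -/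
/-!
A solution of `ẋ = g(x)`, `x(0) = 0` with `g ≥ σ > 0` inverts the travel time
`T(y) = ∫₀^y 1/g`. As `1/g ≥ 1/(ℓ + M)`, this inverse is `(ℓ + M)`-Lipschitz, so
`|x_N(t) - x(t)| ≤ (ℓ + M) ‖1/g - 1/g_N‖_{L¹(0,∞)}` for every `t`. That `L¹` distance tends to `0`
by dominated convergence, the exponential localization providing the majorant
`2M e^{-γq} / σ²`.
-/

open Set Filter Topology MeasureTheory

theorem intervalIntegrable_of_continuousOn_Ici {f : ℝ → ℝ} {c a b : ℝ}
    (hf : ContinuousOn f (Ici c)) (ha : c ≤ a) (hb : c ≤ b) :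
    IntervalIntegrable f volume a b :=
  (hf.mono fun _ hq => (le_min ha hb).trans hq.1).intervalIntegrable

theorem intervalIntegral_le_integral_Ioi {f : ℝ → ℝ} {a b : ℝ} (hab : a ≤ b)
    (hfi : IntegrableOn f (Ioi a)) (hf : ∀ q > a, 0 ≤ f q) :
    ∫ q in a..b, f q ≤ ∫ q in Ioi a, f q := by
  rw [intervalIntegral.integral_of_le hab]
  exact setIntegral_mono_set hfi (ae_restrict_of_forall_mem measurableSet_Ioi hf)
    Ioc_subset_Ioi_self.eventuallyLE

theorem abs_inv_sub_inv_le {σ a b : ℝ} (hσ : 0 < σ) (ha : σ ≤ a) (hb : σ ≤ b) :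
    |a⁻¹ - b⁻¹| ≤ |a - b| / σ ^ 2 := by
  have hab : σ ^ 2 ≤ a * b := by nlinarith
  rw [inv_sub_inv (hσ.trans_le ha).ne' (hσ.trans_le hb).ne', abs_div, abs_sub_comm,
    abs_of_pos (mul_pos (hσ.trans_le ha) (hσ.trans_le hb))]
  exact div_le_div_of_nonneg_left (abs_nonneg _) (pow_pos hσ 2) hab

theorem mul_abs_sub_le_abs_integral {f : ℝ → ℝ} {c a b : ℝ}
    (hfi : IntervalIntegrable f volume a b) (hf : ∀ q ∈ uIcc a b, c ≤ f q) :
    c * |a - b| ≤ |∫ q in b..a, f q| := by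
  wlog hba : b ≤ a generalizing a b
  · rw [abs_sub_comm, intervalIntegral.integral_symm, abs_neg]
    exact this hfi.symm (uIcc_comm a b ▸ hf) (le_of_not_ge hba)
  have hmono := intervalIntegral.integral_mono_on hba intervalIntegrable_const hfi.symm
    fun q hq => hf q (Icc_subset_uIcc' hq)
  rw [intervalIntegral.integral_const, smul_eq_mul] at hmono
  rw [abs_of_nonneg (sub_nonneg.2 hba), mul_comm]
  exact hmono.trans (le_abs_self _)

section Autonomous

variable {g x : ℝ → ℝ}

theorem nonneg_of_hasDerivAt_comp (hg0 : 0 < g 0)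
    (hx : ∀ t ≥ (0:ℝ), HasDerivAt x (g (x t)) t) (hx0 : x 0 = 0) {t : ℝ} (ht : 0 ≤ t) :
    0 ≤ x t := by
  have hneg := image_le_of_deriv_right_lt_deriv_boundary (f := fun s => -x s)
    (f' := fun s => -g (x s)) (B := fun _ => 0) (B' := fun _ => 0)
    (fun s hs => (hx s hs.1).continuousAt.neg.continuousWithinAt)
    (fun s hs => (hx s hs.1).neg.hasDerivWithinAt) (by simp [hx0])
    (fun _ => hasDerivAt_const _ _)
    (fun s _ hxs => by simpa [neg_eq_zero.1 hxs] using hg0) ⟨ht, le_rfl⟩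
  exact neg_nonpos.1 hneg

theorem integral_inv_eq_of_hasDerivAt_comp (hgc : ContinuousOn g (Ici 0))
    (hg : ∀ q ≥ (0:ℝ), 0 < g q)
    (hx : ∀ t ≥ (0:ℝ), HasDerivAt x (g (x t)) t) (hx0 : x 0 = 0) {t : ℝ} (ht : 0 ≤ t) :
    ∫ q in (0:ℝ)..x t, (g q)⁻¹ = t := by
  have hnn : MapsTo x (Icc 0 t) (Ici 0) := fun s hs =>
    nonneg_of_hasDerivAt_comp (hg 0 le_rfl) hx hx0 hs.1
  have hxc : ContinuousOn x (Icc 0 t) := fun s hs =>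
    (hx s hs.1).continuousAt.continuousWithinAt
  have hcov := intervalIntegral.integral_comp_mul_deriv' (a := 0) (b := t) (f := x)
    (f' := g ∘ x) (g := fun q => (g q)⁻¹)
    (fun s hs => hx s (uIcc_of_le ht ▸ hs).1) (uIcc_of_le ht ▸ hgc.comp hxc hnn)
    ((hgc.inv₀ fun q hq => (hg q hq).ne').mono (uIcc_of_le ht ▸ hnn.image_subset))
  rw [← hx0, ← hcov, intervalIntegral.integral_congr (g := fun _ => (1:ℝ))]
  · simp
  · intro s hs
    exact inv_mul_cancel₀ (hg _ (hnn (uIcc_of_le ht ▸ hs))).ne'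

end Autonomous

theorem abs_sub_le_integral_abs_inv_sub_inv {g₁ g₂ x₁ x₂ : ℝ → ℝ} {C t : ℝ}
    (hg₁c : ContinuousOn g₁ (Ici 0)) (hg₂c : ContinuousOn g₂ (Ici 0))
    (hg₁ : ∀ q ≥ (0:ℝ), 0 < g₁ q) (hg₂ : ∀ q ≥ (0:ℝ), 0 < g₂ q)
    (hg₁C : ∀ q ≥ (0:ℝ), g₁ q ≤ C)
    (hx₁ : ∀ t ≥ (0:ℝ), HasDerivAt x₁ (g₁ (x₁ t)) t) (hx₁0 : x₁ 0 = 0)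
    (hx₂ : ∀ t ≥ (0:ℝ), HasDerivAt x₂ (g₂ (x₂ t)) t) (hx₂0 : x₂ 0 = 0) (ht : 0 ≤ t) :
    |x₂ t - x₁ t| ≤ C * ∫ q in (0:ℝ)..x₂ t, |(g₁ q)⁻¹ - (g₂ q)⁻¹| := by
  have hy := nonneg_of_hasDerivAt_comp (hg₁ 0 le_rfl) hx₁ hx₁0 ht
  have hz := nonneg_of_hasDerivAt_comp (hg₂ 0 le_rfl) hx₂ hx₂0 ht
  have hC : 0 < C := (hg₁ 0 le_rfl).trans_le (hg₁C 0 le_rfl)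
  have hf₁i : ∀ {a b : ℝ}, 0 ≤ a → 0 ≤ b → IntervalIntegrable (fun q => (g₁ q)⁻¹) volume a b :=
    intervalIntegrable_of_continuousOn_Ici (hg₁c.inv₀ fun q hq => (hg₁ q hq).ne')
  have hf₂i : ∀ {a b : ℝ}, 0 ≤ a → 0 ≤ b → IntervalIntegrable (fun q => (g₂ q)⁻¹) volume a b :=
    intervalIntegrable_of_continuousOn_Ici (hg₂c.inv₀ fun q hq => (hg₂ q hq).ne')
  -- both times equal `t`, so the gap in heights is the gap between the two travel-time integrals
  have hgap : ∫ q in x₁ t..x₂ t, (g₁ q)⁻¹ = ∫ q in (0:ℝ)..x₂ t, ((g₁ q)⁻¹ - (g₂ q)⁻¹) := by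
    rw [← intervalIntegral.integral_interval_sub_left (hf₁i le_rfl hz) (hf₁i le_rfl hy),
      intervalIntegral.integral_sub (hf₁i le_rfl hz) (hf₂i le_rfl hz),
      integral_inv_eq_of_hasDerivAt_comp hg₁c hg₁ hx₁ hx₁0 ht,
      integral_inv_eq_of_hasDerivAt_comp hg₂c hg₂ hx₂ hx₂0 ht]
  have hlower := mul_abs_sub_le_abs_integral (c := C⁻¹) (hf₁i hz hy) fun q hq =>
    inv_anti₀ (hg₁ q ((le_min hz hy).trans hq.1)) (hg₁C q ((le_min hz hy).trans hq.1))
  rw [hgap] at hlower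
  exact (inv_mul_le_iff₀ hC).1
    (hlower.trans (intervalIntegral.abs_integral_le_integral_abs hz))

section InverseDistance

variable {σ : ℝ} {bound : ℝ → ℝ}

theorem norm_abs_inv_sub_inv_le {g₁ g₂ : ℝ → ℝ} (hσ : 0 < σ)
    (hg₁lb : ∀ q ≥ (0:ℝ), σ ≤ g₁ q) (hg₂lb : ∀ q ≥ (0:ℝ), σ ≤ g₂ q)
    (hdom : ∀ q ≥ (0:ℝ), |g₁ q - g₂ q| ≤ bound q) {q : ℝ} (hq : 0 ≤ q) :
    ‖|(g₁ q)⁻¹ - (g₂ q)⁻¹|‖ ≤ bound q / σ ^ 2 := by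
  rw [Real.norm_eq_abs, abs_abs]
  exact (abs_inv_sub_inv_le hσ (hg₁lb q hq) (hg₂lb q hq)).trans
    (div_le_div_of_nonneg_right (hdom q hq) (sq_nonneg σ))

theorem integrableOn_Ioi_abs_inv_sub_inv {g₁ g₂ : ℝ → ℝ} (hσ : 0 < σ)
    (hg₁c : ContinuousOn g₁ (Ici 0)) (hg₂c : ContinuousOn g₂ (Ici 0))
    (hg₁lb : ∀ q ≥ (0:ℝ), σ ≤ g₁ q) (hg₂lb : ∀ q ≥ (0:ℝ), σ ≤ g₂ q)
    (hbound : IntegrableOn bound (Ioi 0)) (hdom : ∀ q ≥ (0:ℝ), |g₁ q - g₂ q| ≤ bound q) :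
    IntegrableOn (fun q => |(g₁ q)⁻¹ - (g₂ q)⁻¹|) (Ioi 0) := by
  refine (hbound.div_const (σ ^ 2)).mono' ?_
    (ae_restrict_of_forall_mem measurableSet_Ioi fun q hq =>
      norm_abs_inv_sub_inv_le hσ hg₁lb hg₂lb hdom (le_of_lt hq))
  exact (((hg₁c.inv₀ fun q hq => (hσ.trans_le (hg₁lb q hq)).ne').sub
    (hg₂c.inv₀ fun q hq => (hσ.trans_le (hg₂lb q hq)).ne')).abs.mono
    Ioi_subset_Ici_self).aestronglyMeasurable measurableSet_Ioi

theorem tendsto_integral_Ioi_abs_inv_sub_inv (hσ : 0 < σ) {g : ℝ → ℝ}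
    {gN : ℕ → ℝ → ℝ} (hgc : ContinuousOn g (Ici 0)) (hgNc : ∀ N, ContinuousOn (gN N) (Ici 0))
    (hglb : ∀ q ≥ (0:ℝ), σ ≤ g q) (hgNlb : ∀ N, ∀ q ≥ (0:ℝ), σ ≤ gN N q)
    (hbound : IntegrableOn bound (Ioi 0)) (hdom : ∀ N, ∀ q ≥ (0:ℝ), |g q - gN N q| ≤ bound q)
    (hlim : ∀ q ≥ (0:ℝ), Tendsto (fun N => gN N q) atTop (𝓝 (g q))) :
    Tendsto (fun N => ∫ q in Ioi 0, |(g q)⁻¹ - (gN N q)⁻¹|) atTop (𝓝 0) := by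
  have hdct := tendsto_integral_of_dominated_convergence (fun q => bound q / σ ^ 2)
    (fun N => (integrableOn_Ioi_abs_inv_sub_inv hσ hgc (hgNc N) hglb (hgNlb N) hbound
      (hdom N)).aestronglyMeasurable)
    (hbound.div_const _)
    (fun N => ae_restrict_of_forall_mem measurableSet_Ioi fun q hq =>
      norm_abs_inv_sub_inv_le hσ hglb (hgNlb N) (hdom N) (le_of_lt hq))
    (ae_restrict_of_forall_mem measurableSet_Ioi fun q hq =>
      (tendsto_const_nhds.sub ((hlim q hq.le).inv₀
        (hσ.trans_le (hglb q hq.le)).ne')).abs)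
  simpa using hdct

end InverseDistance

/-- Convergence of the ocean-bed parameterizations: if `g_N → g` uniformly on
`[0,∞)`, all uniformly bounded below by `σ > 0` and exponentially localized around
a common limit `ℓ`, then the solutions of `ẋ = g(x)`, `ẋ_N = g_N(x_N)` with zero
initial data converge uniformly on `[0,∞)`. -/
theorem bed_parameterization_convergence (γ σ M ℓ : ℝ)
    (hγ : 0 < γ) (hσ : 0 < σ) (hM : 0 < M)
    (g : ℝ → ℝ) (gN : ℕ → ℝ → ℝ)
    (hgc : ContinuousOn g (Ici 0)) (hgNc : ∀ N, ContinuousOn (gN N) (Ici 0))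
    (hglb : ∀ q ≥ (0:ℝ), σ ≤ g q) (hgNlb : ∀ N, ∀ q ≥ (0:ℝ), σ ≤ gN N q)
    (hgdecay : ∀ q ≥ (0:ℝ), |g q - ℓ| ≤ M * Real.exp (-γ * q))
    (hgNdecay : ∀ N, ∀ q ≥ (0:ℝ), |gN N q - ℓ| ≤ M * Real.exp (-γ * q))
    (hconv : ∀ ε > 0, ∃ N₀, ∀ N ≥ N₀, ∀ q ≥ (0:ℝ), |gN N q - g q| ≤ ε)
    (x : ℝ → ℝ) (xN : ℕ → ℝ → ℝ)
    (hx : ∀ t ≥ (0:ℝ), HasDerivAt x (g (x t)) t) (hx0 : x 0 = 0)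
    (hxN : ∀ N, ∀ t ≥ (0:ℝ), HasDerivAt (xN N) (gN N (xN N t)) t)
    (hxN0 : ∀ N, xN N 0 = 0) :
    ∀ ε > 0, ∃ N₀, ∀ N ≥ N₀, ∀ t ≥ (0:ℝ), |xN N t - x t| ≤ ε := by
  intro ε hε
  have hg_le : ∀ q ≥ (0:ℝ), g q ≤ ℓ + M := fun q hq => by
    have := mul_le_of_le_one_right hM.le (Real.exp_le_one_iff.2 (by nlinarith : -γ * q ≤ 0))
    linarith [(abs_le.1 (hgdecay q hq)).2]
  have hC : 0 < ℓ + M := hσ.trans_le ((hglb 0 le_rfl).trans (hg_le 0 le_rfl))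
  have hlim : ∀ q ≥ (0:ℝ), Tendsto (fun N => gN N q) atTop (𝓝 (g q)) := fun q hq =>
    Metric.tendsto_atTop.2 fun δ hδ => (hconv (δ / 2) (half_pos hδ)).imp fun _ h N hN =>
      (h N hN q hq).trans_lt (half_lt_self hδ)
  have hdom : ∀ N, ∀ q ≥ (0:ℝ), |g q - gN N q| ≤ 2 * M * Real.exp (-γ * q) := fun N q hq => by
    linarith [abs_sub_le (g q) ℓ (gN N q), abs_sub_comm ℓ (gN N q), hgdecay q hq,
      hgNdecay N q hq]
  have hexp := (exp_neg_integrableOn_Ioi 0 hγ).const_mul (2 * M)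
  have hL1 := tendsto_integral_Ioi_abs_inv_sub_inv hσ hgc hgNc hglb hgNlb hexp hdom hlim
  obtain ⟨N₀, hN₀⟩ := eventually_atTop.1 (hL1.eventually (ge_mem_nhds (div_pos hε hC)))
  refine ⟨N₀, fun N hN t ht => ?_⟩
  have hz := nonneg_of_hasDerivAt_comp (hσ.trans_le (hgNlb N 0 le_rfl)) (hxN N) (hxN0 N) ht
  calc |xN N t - x t|
      ≤ (ℓ + M) * ∫ q in (0:ℝ)..xN N t, |(g q)⁻¹ - (gN N q)⁻¹| :=
        abs_sub_le_integral_abs_inv_sub_inv hgc (hgNc N) (fun q hq => hσ.trans_le (hglb q hq))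
          (fun q hq => hσ.trans_le (hgNlb N q hq)) hg_le hx hx0 (hxN N) (hxN0 N) ht
    _ ≤ (ℓ + M) * ∫ q in Ioi 0, |(g q)⁻¹ - (gN N q)⁻¹| := by
        gcongr
        exact intervalIntegral_le_integral_Ioi hz
          (integrableOn_Ioi_abs_inv_sub_inv hσ hgc (hgNc N) hglb (hgNlb N) hexp (hdom N))
          fun _ _ => abs_nonneg _
    _ ≤ (ℓ + M) * (ε / (ℓ + M)) := by gcongr; exact hN₀ N hN
    _ = ε := mul_div_cancel₀ ε hC.ne'
end

section
/- Let ρ, ρ* : [p₀,0] → ℝ be positive with ρ, ρ* ≥ m > 0, and d > 0. If c and c* satisfy d = ∫_{p₀}^0 (c√ρ(s))^{-1} ds and d = ∫_{p₀}^0 (c*√ρ*(s))^{-1} ds, then c − c* = (1/d)∫_{p₀}^0 [ρ(s)^{-1/2} − ρ*(s)^{-1/2}] ds, and |c − c*| ≤ (|p₀|/(2 d m^{3/2})) ‖ρ − ρ*‖_{L^∞}. -/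
/-!
Pulling `1 / c` out of the depth coupling integral gives `c = (1 / d) ∫ ρ^{-1/2}`, and since
`d ≠ 0` that integral is nonzero, so `ρ^{-1/2}` is integrable and the two formulas can be
subtracted. The Lipschitz bound comes from the pointwise estimate
`|a^{-1/2} - b^{-1/2}| = |a - b| / (√a √b (√a + √b)) ≤ |a - b| / (2 m^{3/2})` for `a, b ≥ m`.
-/

open intervalIntegral Set

lemma one_div_sqrt_sub_one_div_sqrt {a b : ℝ} (ha : 0 < a) (hb : 0 < b) :
    1 / √a - 1 / √b = (b - a) / (√a * √b * (√a + √b)) := by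
  have hsa : 0 < √a := Real.sqrt_pos.2 ha
  have hsb : 0 < √b := Real.sqrt_pos.2 hb
  rw [eq_div_iff (by positivity)]
  field_simp
  linear_combination Real.mul_self_sqrt hb.le - Real.mul_self_sqrt ha.le

lemma abs_one_div_sqrt_sub_one_div_sqrt_le {m a b : ℝ} (hm : 0 < m) (ha : m ≤ a) (hb : m ≤ b) :
    |1 / √a - 1 / √b| ≤ |a - b| / (2 * (m * √m)) := by
  have hsm : 0 < √m := Real.sqrt_pos.2 hm
  have hsa : √m ≤ √a := Real.sqrt_le_sqrt ha
  have hsb : √m ≤ √b := Real.sqrt_le_sqrt hb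
  have hsa' : 0 < √a := hsm.trans_le hsa
  have hsb' : 0 < √b := hsm.trans_le hsb
  rw [one_div_sqrt_sub_one_div_sqrt (hm.trans_le ha) (hm.trans_le hb), abs_div, abs_sub_comm,
    abs_of_pos (mul_pos (mul_pos hsa' hsb') (add_pos hsa' hsb'))]
  refine div_le_div_of_nonneg_left (abs_nonneg _) (by positivity) ?_
  calc 2 * (m * √m) = √m * √m * (√m + √m) := by rw [Real.mul_self_sqrt hm.le]; ring
    _ ≤ √a * √b * (√a + √b) := by gcongr

lemma integral_one_div_const_mul {a b c : ℝ} (g : ℝ → ℝ) :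
    ∫ s in a..b, 1 / (c * g s) = 1 / c * ∫ s in a..b, 1 / g s := by
  simp_rw [← one_div_mul_one_div, integral_const_mul]

section DepthCoupling

variable {a b c d : ℝ} {g : ℝ → ℝ}

lemma intervalIntegrable_one_div_of_eq_integral (hd : d ≠ 0)
    (h : d = ∫ s in a..b, 1 / (c * g s)) :
    IntervalIntegrable (fun s => 1 / g s) MeasureTheory.volume a b := by
  rw [integral_one_div_const_mul] at h
  exact intervalIntegrable_of_integral_ne_zero (right_ne_zero_of_mul (h ▸ hd))

lemma eq_one_div_mul_integral_of_eq_integral (hd : d ≠ 0)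
    (h : d = ∫ s in a..b, 1 / (c * g s)) :
    c = 1 / d * ∫ s in a..b, 1 / g s := by
  rw [integral_one_div_const_mul] at h
  obtain ⟨hc, hI⟩ := mul_ne_zero_iff.1 (h ▸ hd)
  rw [h]
  field_simp [show c ≠ 0 by simpa using hc]

end DepthCoupling

theorem wave_speed_continuity_general (p₀ d m c cs : ℝ)
    (hp₀ : p₀ < 0) (hd : 0 < d) (hm : 0 < m)
    (ρ ρs : ℝ → ℝ)
    (hρlb : ∀ s ∈ Icc p₀ (0:ℝ), m ≤ ρ s) (hρslb : ∀ s ∈ Icc p₀ (0:ℝ), m ≤ ρs s)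
    (hcoup : d = ∫ s in p₀..(0:ℝ), 1 / (c * Real.sqrt (ρ s)))
    (hcoups : d = ∫ s in p₀..(0:ℝ), 1 / (cs * Real.sqrt (ρs s))) :
    c - cs = (1 / d) * ∫ s in p₀..(0:ℝ), (1 / Real.sqrt (ρ s) - 1 / Real.sqrt (ρs s)) ∧
    ∀ B : ℝ, 0 ≤ B → (∀ s ∈ Icc p₀ (0:ℝ), |ρ s - ρs s| ≤ B) →
      |c - cs| ≤ |p₀| / (2 * d * (m * Real.sqrt m)) * B := by
  have hdiff : c - cs = (1 / d) * ∫ s in p₀..(0:ℝ), (1 / √(ρ s) - 1 / √(ρs s)) := by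
    rw [integral_sub (intervalIntegrable_one_div_of_eq_integral hd.ne' hcoup)
      (intervalIntegrable_one_div_of_eq_integral hd.ne' hcoups), mul_sub,
      ← eq_one_div_mul_integral_of_eq_integral hd.ne' hcoup,
      ← eq_one_div_mul_integral_of_eq_integral hd.ne' hcoups]
  refine ⟨hdiff, fun B _ hρB => ?_⟩
  have hpointwise : ∀ s ∈ uIoc p₀ 0, ‖1 / √(ρ s) - 1 / √(ρs s)‖ ≤ B / (2 * (m * √m)) := by
    intro s hs
    rw [uIoc_of_le hp₀.le] at hs
    have hs : s ∈ Icc p₀ 0 := Ioc_subset_Icc_self hs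
    refine (abs_one_div_sqrt_sub_one_div_sqrt_le hm (hρlb s hs) (hρslb s hs)).trans ?_
    gcongr
    exact hρB s hs
  have hsm : 0 < √m := Real.sqrt_pos.2 hm
  calc |c - cs| = 1 / d * ‖∫ s in p₀..(0:ℝ), (1 / √(ρ s) - 1 / √(ρs s))‖ := by
        rw [hdiff, Real.norm_eq_abs, abs_mul, abs_of_pos (by positivity)]
    _ ≤ 1 / d * (B / (2 * (m * √m)) * |0 - p₀|) := by
        gcongr
        exact norm_integral_le_of_norm_le_const hpointwise
    _ = |p₀| / (2 * d * (m * √m)) * B := by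
        rw [zero_sub, abs_neg]
        field_simp

/-- Continuity of the wave speed in the streamline density: if `c` and `c*` both
satisfy the depth coupling relation for densities `ρ`, `ρ*` bounded below by
`m > 0`, then `c − c* = (1/d)∫(ρ^{-1/2} − ρ*^{-1/2})` and
`|c − c*| ≤ (|p₀|/(2dm^{3/2})) ‖ρ − ρ*‖_∞`. -/
theorem wave_speed_continuity (p₀ d m c cs : ℝ)
    (hp₀ : p₀ < 0) (hd : 0 < d) (hm : 0 < m) (hc : 0 < c) (hcs : 0 < cs)
    (ρ ρs : ℝ → ℝ)
    (hρc : ContinuousOn ρ (Icc p₀ 0)) (hρsc : ContinuousOn ρs (Icc p₀ 0))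
    (hρlb : ∀ s ∈ Icc p₀ (0:ℝ), m ≤ ρ s) (hρslb : ∀ s ∈ Icc p₀ (0:ℝ), m ≤ ρs s)
    (hcoup : d = ∫ s in p₀..(0:ℝ), 1 / (c * Real.sqrt (ρ s)))
    (hcoups : d = ∫ s in p₀..(0:ℝ), 1 / (cs * Real.sqrt (ρs s))) :
    c - cs = (1 / d) * ∫ s in p₀..(0:ℝ), (1 / Real.sqrt (ρ s) - 1 / Real.sqrt (ρs s)) ∧
    ∀ B : ℝ, 0 ≤ B → (∀ s ∈ Icc p₀ (0:ℝ), |ρ s - ρs s| ≤ B) →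
      |c - cs| ≤ |p₀| / (2 * d * (m * Real.sqrt m)) * B :=
  wave_speed_continuity_general p₀ d m c cs hp₀ hd hm ρ ρs hρlb hρslb hcoup hcoups
end
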